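/- arXiv:2303.16012 — 2 statements merged into one kernel-verified Lean document; each statement's English description precedes it below -/
import Mathlib

section
/- Let J ≥ 1, L > 0, and let f : ℝ → ℝ be (J+1)-times continuously differentiable with |f^{(J+1)}(x)| ≤ H_{J+1} for all x. For k ∈ ℕ, define the cosine Fourier coefficient a_k = (1/L) ∫_{-L}^{L} f(x) cos(kπ(x+L)/(2L)) dx. Then |a_k| ≤ Σ_{j=1}^{J} (2^{j+1}/π^{j+1}) (L^j / k^{j+1}) (|f^{(j)}(-L)| + |f^{(j)}(L)|) + (2^{J+2} H_{J+1} / π^{J+1}) (L^{J+1} / k^{J+1}). -/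
/-!
With `ν = kπ/(2L)` the integrand is `f x * cos (ν x + νL)`. Integrating by parts against
`cos (ν x + φ)` produces boundary terms `f(±L) sin(±νL + φ) / ν` and the integral of `f'` against
the same cosine with phase advanced by `π/2`. In the first step the boundary terms vanish, since the
phase at `x = -L, L` is `0` and `kπ`; in the next `J` steps they are bounded by
`|f⁽ʲ⁾(-L)| + |f⁽ʲ⁾(L)|` over `ν^(j+1)`, and the final integral is at most `2L·H / ν^(J+1)`.
-/

open Real MeasureTheory Set

section CosineIntegrationByParts

variable {g g' : ℝ → ℝ} {a b ν : ℝ}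

/-- The phase shift by `π / 2` absorbs the sign of `-sin θ = cos (θ + π / 2)`. -/
theorem integral_mul_cos_eq (hg : ∀ x ∈ uIcc a b, HasDerivAt g (g' x) x)
    (hg' : IntervalIntegrable g' volume a b) (hν : ν ≠ 0) (φ : ℝ) :
    ∫ x in a..b, g x * cos (ν * x + φ) =
      (g b * sin (ν * b + φ) - g a * sin (ν * a + φ)) / ν
        + ν⁻¹ * ∫ x in a..b, g' x * cos (ν * x + (φ + π / 2)) := by
  have hsin : ∀ x ∈ uIcc a b,
      HasDerivAt (fun y => sin (ν * y + φ) / ν) (cos (ν * x + φ)) x := by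
    intro x _
    have := ((((hasDerivAt_id x).const_mul ν).add_const φ).sin).div_const ν
    simpa [hν] using this
  rw [intervalIntegral.integral_mul_deriv_eq_deriv_mul hg hsin hg'
    (by apply Continuous.intervalIntegrable; fun_prop)]
  have hrest : ∫ x in a..b, g' x * (sin (ν * x + φ) / ν)
      = -(ν⁻¹ * ∫ x in a..b, g' x * cos (ν * x + (φ + π / 2))) := by
    simp only [← add_assoc, cos_add_pi_div_two, ← intervalIntegral.integral_const_mul,
      ← intervalIntegral.integral_neg]
    congr 1 with x
    ring
  rw [hrest]
  ring

theorem abs_integral_mul_cos_le (hg : ∀ x ∈ uIcc a b, HasDerivAt g (g' x) x)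
    (hg' : IntervalIntegrable g' volume a b) (hν : ν ≠ 0) (φ : ℝ) :
    |∫ x in a..b, g x * cos (ν * x + φ)| ≤
      (|g a| + |g b|) / |ν| + |∫ x in a..b, g' x * cos (ν * x + (φ + π / 2))| / |ν| := by
  rw [integral_mul_cos_eq hg hg' hν φ]
  have hboundary : |g b * sin (ν * b + φ) - g a * sin (ν * a + φ)| ≤ |g a| + |g b| := by
    calc _ ≤ |g b * sin (ν * b + φ)| + |g a * sin (ν * a + φ)| := abs_sub _ _
      _ ≤ |g b| + |g a| := by
        gcongr ?_ + ?_ <;> rw [abs_mul] <;>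
          exact mul_le_of_le_one_right (abs_nonneg _) (abs_sin_le_one _)
      _ = |g a| + |g b| := add_comm _ _
  calc _ ≤ |(g b * sin (ν * b + φ) - g a * sin (ν * a + φ)) / ν|
        + |ν⁻¹ * ∫ x in a..b, g' x * cos (ν * x + (φ + π / 2))| := abs_add_le _ _
    _ ≤ _ := by
      rw [abs_div, abs_mul, abs_inv, inv_mul_eq_div]
      gcongr

theorem abs_integral_mul_cos_le_sum {f : ℝ → ℝ} {n : ℕ} (hf : ContDiff ℝ n f) (hν : ν ≠ 0)
    (φ : ℝ) :
    |∫ x in a..b, f x * cos (ν * x + φ)| ≤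
      ∑ j ∈ Finset.range n, (|iteratedDeriv j f a| + |iteratedDeriv j f b|) / |ν| ^ (j + 1)
        + |∫ x in a..b, iteratedDeriv n f x * cos (ν * x + (φ + n * (π / 2)))| / |ν| ^ n := by
  induction n with
  | zero => simp
  | succ n ih =>
    have hderiv : ∀ x ∈ uIcc a b,
        HasDerivAt (iteratedDeriv n f) (iteratedDeriv (n + 1) f x) x := fun x _ => by
      rw [iteratedDeriv_succ]
      exact ((hf.differentiable_iteratedDeriv n (by exact_mod_cast n.lt_succ_self)) x).hasDerivAt
    have hcont : Continuous (iteratedDeriv (n + 1) f) := hf.continuous_iteratedDeriv _ le_rfl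
    have hstep := abs_integral_mul_cos_le hderiv (hcont.intervalIntegrable a b) hν
      (φ + n * (π / 2))
    have hphase : φ + n * (π / 2) + π / 2 = φ + ((n + 1 : ℕ) : ℝ) * (π / 2) := by
      push_cast; ring
    rw [hphase] at hstep
    refine (ih (hf.of_le (by exact_mod_cast n.le_succ))).trans ?_
    rw [Finset.sum_range_succ, add_assoc]
    gcongr _ + ?_
    calc _ ≤ ((|iteratedDeriv n f a| + |iteratedDeriv n f b|) / |ν| + |∫ x in a..b,
          iteratedDeriv (n + 1) f x * cos (ν * x + (φ + (n + 1 : ℕ) * (π / 2)))| / |ν|) / |ν| ^ n :=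
          div_le_div_of_nonneg_right hstep (by positivity)
      _ = _ := by rw [pow_succ']; ring

theorem abs_integral_mul_cos_le_of_abs_le {ψ : ℝ → ℝ} {H : ℝ}
    (hg : ∀ x ∈ uIcc a b, |g x| ≤ H) :
    |∫ x in a..b, g x * cos (ψ x)| ≤ H * |b - a| := by
  simpa only [Real.norm_eq_abs] using
    intervalIntegral.norm_integral_le_of_norm_le_const (f := fun x => g x * cos (ψ x))
      fun x hx => by
      rw [norm_mul]
      exact (mul_le_of_le_one_right (abs_nonneg _) (abs_cos_le_one _)).trans
        (hg x (uIoc_subset_uIcc hx))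

theorem abs_integral_mul_cos_le_of_sin_eq_zero {f : ℝ → ℝ} {n : ℕ} {H φ : ℝ}
    (hf : ContDiff ℝ (n + 1 : ℕ) f) (hH : ∀ x ∈ uIcc a b, |iteratedDeriv (n + 1) f x| ≤ H)
    (hν : ν ≠ 0) (ha : sin (ν * a + φ) = 0) (hb : sin (ν * b + φ) = 0) :
    |∫ x in a..b, f x * cos (ν * x + φ)| ≤
      ∑ j ∈ Finset.Icc 1 n, (|iteratedDeriv j f a| + |iteratedDeriv j f b|) / |ν| ^ (j + 1)
        + H * |b - a| / |ν| ^ (n + 1) := by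
  obtain ⟨hdiff, -, hf'⟩ := contDiff_succ_iff_deriv.mp (by exact_mod_cast hf :
    ContDiff ℝ (n + 1) f)
  have hfirst : ∫ x in a..b, f x * cos (ν * x + φ) =
      ν⁻¹ * ∫ x in a..b, deriv f x * cos (ν * x + (φ + π / 2)) := by
    rw [integral_mul_cos_eq (fun x _ => (hdiff x).hasDerivAt)
      (hf'.continuous.intervalIntegrable _ _) hν, ha, hb]
    simp
  have hiter := abs_integral_mul_cos_le_sum (a := a) (b := b) hf' hν (φ + π / 2)
  simp only [← iteratedDeriv_succ'] at hiter
  rw [hfirst, abs_mul, abs_inv, ← Finset.Ico_add_one_right_eq_Icc, Finset.sum_Ico_eq_sum_range,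
    add_tsub_cancel_right]
  calc _ ≤ |ν|⁻¹ * (∑ j ∈ Finset.range n,
          (|iteratedDeriv (j + 1) f a| + |iteratedDeriv (j + 1) f b|) / |ν| ^ (j + 1)
          + H * |b - a| / |ν| ^ n) := by
        gcongr
        exact hiter.trans (by gcongr; exact abs_integral_mul_cos_le_of_abs_le hH)
    _ = _ := by
        rw [mul_add, Finset.mul_sum]
        congr 1
        · refine Finset.sum_congr rfl fun j _ => ?_
          rw [add_comm 1 j]
          ring
        · ring

end CosineIntegrationByParts

theorem cos_coefficient_bound_general
    (J : ℕ) (L : ℝ) (hL : 0 < L) (f : ℝ → ℝ) (H : ℝ)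
    (hf : ContDiff ℝ (J + 1 : ℕ) f)
    (hH : ∀ x : ℝ, |iteratedDeriv (J + 1) f x| ≤ H)
    (k : ℕ) (hk : 1 ≤ k) :
    |(1 / L) * ∫ x in (-L)..L, f x * Real.cos (k * π * (x + L) / (2 * L))| ≤
      (∑ j ∈ Finset.Icc 1 J,
        (2 ^ (j + 1) / π ^ (j + 1)) * (L ^ j / (k : ℝ) ^ (j + 1)) *
          (|iteratedDeriv j f (-L)| + |iteratedDeriv j f L|))
      + (2 ^ (J + 2) * H / π ^ (J + 1)) * (L ^ (J + 1) / (k : ℝ) ^ (J + 1)) := by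
  have hk₀ : (0 : ℝ) < k := by exact_mod_cast hk
  set ν : ℝ := k * π / (2 * L) with hν_def
  have hν : 0 < ν := by positivity
  have hphase : ∀ x, k * π * (x + L) / (2 * L) = ν * x + ν * L := fun x => by
    rw [hν_def]; ring
  have hleft : sin (ν * -L + ν * L) = 0 := by rw [mul_neg, neg_add_cancel, sin_zero]
  have hright : sin (ν * L + ν * L) = 0 := by
    rw [← sin_nat_mul_pi k]; congr 1; rw [hν_def]; field_simp; ring
  have hscale : ∀ j : ℕ, 1 / L / ν ^ (j + 1) = 2 ^ (j + 1) / π ^ (j + 1) * (L ^ j / k ^ (j + 1)) :=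
    fun j => by rw [hν_def, div_pow, mul_pow, mul_pow]; field_simp; ring
  calc _ = 1 / L * |∫ x in (-L)..L, f x * cos (ν * x + ν * L)| := by
        simp_rw [hphase]; rw [abs_mul, abs_of_pos (by positivity)]
    _ ≤ 1 / L * (∑ j ∈ Finset.Icc 1 J,
          (|iteratedDeriv j f (-L)| + |iteratedDeriv j f L|) / |ν| ^ (j + 1)
          + H * |L - -L| / |ν| ^ (J + 1)) := by
        gcongr
        exact abs_integral_mul_cos_le_of_sin_eq_zero hf (fun x _ => hH x) hν.ne' hleft hright
    _ = _ := by
        rw [abs_of_pos hν, sub_neg_eq_add, abs_of_pos (by positivity), mul_add, Finset.mul_sum]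
        congr 1
        · refine Finset.sum_congr rfl fun j _ => ?_
          linear_combination (|iteratedDeriv j f (-L)| + |iteratedDeriv j f L|) * hscale j
        · linear_combination 2 * L * H * hscale J

/-- Decay bound for the cosine Fourier coefficients of a smooth function. -/
theorem cos_coefficient_bound
    (J : ℕ) (hJ : 1 ≤ J) (L : ℝ) (hL : 0 < L) (f : ℝ → ℝ) (H : ℝ)
    (hf : ContDiff ℝ (J + 1 : ℕ) f)
    (hH : ∀ x : ℝ, |iteratedDeriv (J + 1) f x| ≤ H)
    (k : ℕ) (hk : 1 ≤ k) :
    |(1 / L) * ∫ x in (-L)..L, f x * Real.cos (k * π * (x + L) / (2 * L))| ≤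
      (∑ j ∈ Finset.Icc 1 J,
        (2 ^ (j + 1) / π ^ (j + 1)) * (L ^ j / (k : ℝ) ^ (j + 1)) *
          (|iteratedDeriv j f (-L)| + |iteratedDeriv j f L|))
      + (2 ^ (J + 2) * H / π ^ (J + 1)) * (L ^ (J + 1) / (k : ℝ) ^ (J + 1)) :=
  cos_coefficient_bound_general J L hL f H hf hH k hk
end

section
/- Let f : ℝ → ℝ be a nonnegative, integrable, square-integrable, continuously differentiable function with x f²(x) → 0 as x → ±∞, and suppose for some L > 0 that f'(x) ≥ 0 for x ≤ −L and f'(x) ≤ 0 for x ≥ L. Define B(L) = Σ_{k=0}^{∞} (1/L) |∫_{ℝ∖[−L,L]} f(x) cos(kπ(x+L)/(2L)) dx|². Then B(L) ≤ (1/L)(∫_{ℝ∖[−L,L]} f(x) dx)² + (8/3) L max(f²(L), f²(−L)). -/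
/-!
On each tail of `(Icc (-L) L)ᶜ` the function `f` is monotone and tends to `0` (because
`x * f x ^ 2 → 0`). Integrating by parts against the primitive `sin (a x + b) / a` of the cosine,
which vanishes at `±L`, leaves `∫ f' · sin (a x + b) / a`, and monotonicity gives `∫ |f'| = f (±L)`;
so the `k`-th coefficient of each tail is at most `(2L / (kπ)) f (±L)`. Squaring,
`(a + b)² ≤ 4 max(a², b²)` and `∑ 1 / k² = π² / 6` give the second term of the bound; the `k = 0`
term is the first.
-/

open Real MeasureTheory Set Filter Topology

lemma tendsto_zero_of_tendsto_mul_sq {l : Filter ℝ} {f : ℝ → ℝ} (hl : ∀ᶠ x in l, 1 ≤ |x|)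
    (h : Tendsto (fun x => x * f x ^ 2) l (𝓝 0)) : Tendsto f l (𝓝 0) := by
  have hsq : Tendsto (fun x => f x ^ 2) l (𝓝 0) := by
    refine squeeze_zero' (.of_forall fun x => sq_nonneg _) ?_ (by simpa using h.abs)
    filter_upwards [hl] with x hx
    exact le_mul_of_one_le_left (sq_nonneg _) hx
  rw [tendsto_zero_iff_abs_tendsto_zero]
  simpa only [sqrt_sq_eq_abs, sqrt_zero, Function.comp_def] using hsq.sqrt

section MonotoneTail

variable {h h' : ℝ → ℝ} {L : ℝ}

lemma abs_integral_Ioi_deriv_mul_le (hcont : ContinuousWithinAt h (Ici L) L)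
    (hderiv : ∀ x ∈ Ioi L, HasDerivAt h (h' x) x) (hanti : ∀ x ∈ Ioi L, h' x ≤ 0)
    (hlim : Tendsto h atTop (𝓝 0)) {v : ℝ → ℝ} {C : ℝ} (hv : ∀ x, |v x| ≤ C) :
    |∫ x in Ioi L, h' x * v x| ≤ C * h L := by
  have hint : IntegrableOn h' (Ioi L) := integrableOn_Ioi_deriv_of_nonpos hcont hderiv hanti hlim
  calc |∫ x in Ioi L, h' x * v x| ≤ ∫ x in Ioi L, |h' x * v x| := abs_integral_le_integral_abs
    _ ≤ ∫ x in Ioi L, C * -h' x := by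
      refine integral_mono_of_nonneg (.of_forall fun x => abs_nonneg _) (hint.neg.const_mul C)
        (ae_restrict_of_forall_mem measurableSet_Ioi fun x hx => ?_)
      change |h' x * v x| ≤ C * -h' x
      rw [abs_mul, abs_of_nonpos (hanti x hx), mul_comm]
      exact mul_le_mul_of_nonneg_right (hv x) (neg_nonneg.2 (hanti x hx))
    _ = C * h L := by
      rw [integral_const_mul, integral_neg,
        integral_Ioi_of_hasDerivAt_of_nonpos hcont hderiv hanti hlim, zero_sub, neg_neg]

lemma abs_integral_Ioi_mul_cos_le (hcont : ContinuousWithinAt h (Ici L) L)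
    (hderiv : ∀ x ∈ Ioi L, HasDerivAt h (h' x) x) (hanti : ∀ x ∈ Ioi L, h' x ≤ 0)
    (hlim : Tendsto h atTop (𝓝 0)) (hint : IntegrableOn h (Ioi L)) {a b : ℝ} (ha : 0 < a)
    (hsin : sin (a * L + b) = 0) :
    |∫ x in Ioi L, h x * cos (a * x + b)| ≤ a⁻¹ * h L := by
  set v : ℝ → ℝ := fun x => sin (a * x + b) / a
  have hv_cont : Continuous v := by fun_prop
  have hv_bound : ∀ x, |v x| ≤ a⁻¹ := fun x => by
    rw [abs_div, abs_of_pos ha, div_eq_inv_mul]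
    exact mul_le_of_le_one_right (inv_nonneg.2 ha.le) (abs_sin_le_one _)
  have hv_deriv : ∀ x, HasDerivAt v (cos (a * x + b)) x := fun x => by
    have := (((hasDerivAt_id x).const_mul a).add_const b).sin.div_const a
    simpa [ha.ne'] using this
  have hparts := integral_Ioi_mul_deriv_eq_deriv_mul (a' := 0) (b' := 0) hderiv
    (fun x _ => hv_deriv x)
    (hint.mul_bdd (by fun_prop) (.of_forall fun x => by simpa using abs_cos_le_one (a * x + b)))
    ((integrableOn_Ioi_deriv_of_nonpos hcont hderiv hanti hlim).mul_bdd
      hv_cont.aestronglyMeasurable (.of_forall fun x => hv_bound x))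
    (by simpa [v, hsin] using
      ((hcont.mono Ioi_subset_Ici_self).mul hv_cont.continuousWithinAt).tendsto)
    (hlim.zero_mul_isBoundedUnder_le ⟨a⁻¹, eventually_map.2 (.of_forall hv_bound)⟩)
  rw [hparts, sub_zero, zero_sub, abs_neg]
  exact abs_integral_Ioi_deriv_mul_le hcont hderiv hanti hlim hv_bound

end MonotoneTail

lemma abs_integral_compl_Icc_mul_cos_le {f : ℝ → ℝ} {L : ℝ} (hL : 0 < L)
    (hf : Differentiable ℝ f) (hint : Integrable f)
    (htop : Tendsto f atTop (𝓝 0)) (hbot : Tendsto f atBot (𝓝 0))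
    (hleft : ∀ x : ℝ, x ≤ -L → 0 ≤ deriv f x) (hright : ∀ x : ℝ, L ≤ x → deriv f x ≤ 0)
    {k : ℕ} (hk : 0 < k) :
    |∫ x in (Icc (-L) L)ᶜ, f x * cos (k * π * (x + L) / (2 * L))| ≤
      2 * L / (k * π) * (f (-L) + f L) := by
  set a : ℝ := k * π / (2 * L)
  have ha : 0 < a := by positivity
  have hphase : ∀ x, k * π * (x + L) / (2 * L) = a * x + k * π / 2 := fun x => by
    simp only [a]; field_simp
  have hIoi : |∫ x in Ioi L, f x * cos (k * π * (x + L) / (2 * L))| ≤ a⁻¹ * f L := by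
    simp only [hphase]
    refine abs_integral_Ioi_mul_cos_le hf.continuous.continuousWithinAt
      (fun x _ => (hf x).hasDerivAt) (fun x hx => hright x hx.le) htop hint.integrableOn
      ha ?_
    rw [← hphase, show (k * π * (L + L) / (2 * L) : ℝ) = k * π by field_simp; ring]
    exact sin_nat_mul_pi k
  have hIio : |∫ x in Iio (-L), f x * cos (k * π * (x + L) / (2 * L))| ≤ a⁻¹ * f (-L) := by
    rw [← integral_Iic_eq_integral_Iio, ← integral_comp_neg_Ioi]
    have hphase' : ∀ x, k * π * (-x + L) / (2 * L) = -(a * x + -(k * π / 2)) := fun x => by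
      simp only [a]; field_simp; ring
    simp only [hphase', cos_neg]
    refine abs_integral_Ioi_mul_cos_le (h' := fun x => -deriv f (-x))
      (hf.continuous.comp continuous_neg).continuousWithinAt
      (fun x _ => by simpa using ((hf (-x)).hasDerivAt.comp x (hasDerivAt_neg x)))
      (fun x hx => neg_nonpos.2 (hleft (-x) (by linarith [mem_Ioi.1 hx])))
      (hbot.comp tendsto_neg_atTop_atBot) ?_ ha ?_
    · exact hint.comp_neg.integrableOn
    · rw [show a * L + -(k * π / 2) = 0 by simp only [a]; field_simp; ring, sin_zero]
  have hsplit : (Icc (-L) L)ᶜ = Iio (-L) ∪ Ioi L := by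
    ext x
    simp only [mem_compl_iff, mem_Icc, not_and_or, not_le, mem_union, mem_Iio, mem_Ioi]
  have hainv : a⁻¹ = 2 * L / (k * π) := inv_div _ _
  have hφ : Integrable (fun x => f x * cos (k * π * (x + L) / (2 * L))) :=
    hint.mul_bdd (by fun_prop) (.of_forall fun x => by simpa using abs_cos_le_one _)
  rw [hsplit, setIntegral_union (Iio_disjoint_Ioi_of_le (by linarith)) measurableSet_Ioi
    hφ.integrableOn hφ.integrableOn]
  calc _ ≤ _ := abs_add_le _ _
    _ ≤ a⁻¹ * f (-L) + a⁻¹ * f L := add_le_add hIio hIoi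
    _ = _ := by rw [hainv]; ring

lemma tsum_le_of_le_div_sq {T : ℕ → ℝ} {C : ℝ} (hT : ∀ k, 0 ≤ T k)
    (hC : ∀ k : ℕ, 0 < k → T k ≤ C / k ^ 2) : ∑' k, T k ≤ T 0 + C * (π ^ 2 / 6) := by
  have hdom : HasSum (fun k : ℕ => (if k = 0 then T 0 else 0) + C * (1 / (k : ℝ) ^ 2))
      (T 0 + C * (π ^ 2 / 6)) :=
    (hasSum_ite_eq 0 (T 0)).add (hasSum_zeta_two.mul_left C)
  have hle : ∀ k, T k ≤ (if k = 0 then T 0 else 0) + C * (1 / (k : ℝ) ^ 2) := by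
    rintro (_ | k)
    · simp
    · simpa [div_eq_mul_inv] using hC (k + 1) k.succ_pos
  exact hasSum_le hle (Summable.of_nonneg_of_le hT hle hdom.summable).hasSum hdom

theorem B_L_bound_general
    (f : ℝ → ℝ) (L : ℝ) (hL : 0 < L)
    (hf_int : Integrable f)
    (hf_cd : ContDiff ℝ 1 f)
    (htop : Tendsto (fun x : ℝ => x * f x ^ 2) atTop (𝓝 0))
    (hbot : Tendsto (fun x : ℝ => x * f x ^ 2) atBot (𝓝 0))
    (hleft : ∀ x : ℝ, x ≤ -L → 0 ≤ deriv f x)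
    (hright : ∀ x : ℝ, L ≤ x → deriv f x ≤ 0) :
    (∑' k : ℕ, (1 / L) *
        |∫ x in (Set.Icc (-L) L)ᶜ, f x * Real.cos (k * π * (x + L) / (2 * L))| ^ 2) ≤
      (1 / L) * (∫ x in (Set.Icc (-L) L)ᶜ, f x) ^ 2 +
        (8 / 3) * L * max (f L ^ 2) (f (-L) ^ 2) := by
  have hf_top := tendsto_zero_of_tendsto_mul_sq
    ((eventually_ge_atTop 1).mono fun x hx => hx.trans (le_abs_self x)) htop
  have hf_bot := tendsto_zero_of_tendsto_mul_sq
    ((eventually_le_atBot (-1)).mono fun x hx => by rw [abs_of_neg (by linarith)]; linarith) hbot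
  set M := max (f L ^ 2) (f (-L) ^ 2)
  have hM : (f (-L) + f L) ^ 2 ≤ 4 * M := by
    nlinarith [sq_nonneg (f L - f (-L)), le_max_left (f L ^ 2) (f (-L) ^ 2),
      le_max_right (f L ^ 2) (f (-L) ^ 2)]
  refine (tsum_le_of_le_div_sq (C := 16 * L * M / π ^ 2) (fun k => by positivity)
    fun k hk => ?_).trans_eq ?_
  · have hI := abs_integral_compl_Icc_mul_cos_le hL hf_cd.differentiable_one hf_int hf_top hf_bot
      hleft hright hk
    have hk' : (0 : ℝ) < k := Nat.cast_pos.2 hk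
    calc (1 / L) * |∫ x in (Icc (-L) L)ᶜ, f x * cos (k * π * (x + L) / (2 * L))| ^ 2
        ≤ (1 / L) * (2 * L / (k * π) * (f (-L) + f L)) ^ 2 := by gcongr
      _ = 4 * L / (k * π) ^ 2 * (f (-L) + f L) ^ 2 := by field_simp; ring
      _ ≤ 4 * L / (k * π) ^ 2 * (4 * M) := by gcongr
      _ = 16 * L * M / π ^ 2 / k ^ 2 := by field_simp; ring
  · simp only [CharP.cast_eq_zero, zero_mul, zero_div, cos_zero, mul_one, sq_abs]
    field_simp
    ring

/-- Bound for the truncation-range term `B(L)` of the COS method for a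
monotone-tailed density. -/
theorem B_L_bound
    (f : ℝ → ℝ) (L : ℝ) (hL : 0 < L)
    (hf_nonneg : ∀ x : ℝ, 0 ≤ f x)
    (hf_int : Integrable f)
    (hf_sq : Integrable (fun x => f x ^ 2))
    (hf_cd : ContDiff ℝ 1 f)
    (htop : Tendsto (fun x : ℝ => x * f x ^ 2) atTop (𝓝 0))
    (hbot : Tendsto (fun x : ℝ => x * f x ^ 2) atBot (𝓝 0))
    (hleft : ∀ x : ℝ, x ≤ -L → 0 ≤ deriv f x)
    (hright : ∀ x : ℝ, L ≤ x → deriv f x ≤ 0) :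
    (∑' k : ℕ, (1 / L) *
        |∫ x in (Set.Icc (-L) L)ᶜ, f x * Real.cos (k * π * (x + L) / (2 * L))| ^ 2) ≤
      (1 / L) * (∫ x in (Set.Icc (-L) L)ᶜ, f x) ^ 2 +
        (8 / 3) * L * max (f L ^ 2) (f (-L) ^ 2) :=
  B_L_bound_general f L hL hf_int hf_cd htop hbot hleft hright
end
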